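/- arXiv:1607.02223 — 10 statements merged into one kernel-verified Lean document; each statement's English description precedes it below -/
import Mathlib

section
/- Let G be a group, let a, b, c ∈ G with a and b commuting, let b₃, b₄, c₁, c₂ be integers, and let φ : G → G be a group homomorphism satisfying φ(a) = a, φ(b) = a^{b₃}·b^{b₄}, and φ(c) = a^{c₁}·b^{c₂}·c. Then for every natural number n ≥ 1 the n-th iterate φⁿ satisfies: φⁿ(a) = a, φⁿ(b) = a^{b₃·∑_{i=0}^{n−1} b₄^i}·b^{b₄^n}, and φⁿ(c) = a^{n·c₁ + b₃·c₂·∑_{i=0}^{n−2} (n−1−i)·b₄^i}·b^{c₂·∑_{i=0}^{n−1} b₄^i}·c. -/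
theorem iterate_induced_hom (G : Type*) [Group G] (a b c : G)
    (hab : a * b = b * a)
    (b₃ b₄ c₁ c₂ : ℤ) (φ : G →* G)
    (ha : φ a = a)
    (hb : φ b = a ^ b₃ * b ^ b₄)
    (hc : φ c = a ^ c₁ * b ^ c₂ * c) :
    ∀ n : ℕ, 1 ≤ n →
      (⇑φ)^[n] a = a ∧
      (⇑φ)^[n] b = a ^ (b₃ * ∑ i ∈ Finset.range n, b₄ ^ i) * b ^ (b₄ ^ n) ∧
      (⇑φ)^[n] c =
        a ^ ((n : ℤ) * c₁ + b₃ * c₂ * ∑ i ∈ Finset.range (n - 1), ((n : ℤ) - 1 - (i : ℤ)) * b₄ ^ i) *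
          b ^ (c₂ * ∑ i ∈ Finset.range n, b₄ ^ i) * c := by
  have h : Commute a b := hab
  have key : ∀ x y u v : ℤ, (a^x*b^y)*(a^u*b^v) = a^(x+u)*b^(y+v) := by
    intro x y u v
    rw [zpow_add, zpow_add]
    exact (Commute.mul_mul_mul_comm (h.symm.zpow_zpow y u) _ _)
  have hφab : ∀ x y : ℤ, φ (a^x * b^y) = a^(x + b₃*y) * b^(b₄*y) := by
    intro x y
    rw [map_mul, map_zpow, map_zpow, ha, hb, (h.zpow_zpow b₃ b₄).mul_zpow,
      ← zpow_mul, ← zpow_mul, ← mul_assoc, ← zpow_add]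
  have hφc : ∀ x y : ℤ, φ (a^x * b^y * c) = a^((x + b₃*y) + c₁) * b^(b₄*y + c₂) * c := by
    intro x y
    rw [map_mul, hφab, hc, ← mul_assoc, key]
  refine Nat.le_induction ?_ ?_
  · refine ⟨by simpa using ha, by simpa using hb, by simpa using hc⟩
  · rintro n hn ⟨iha, ihb, ihc⟩
    obtain ⟨m, rfl⟩ : ∃ m, n = m + 1 := ⟨n - 1, (Nat.succ_pred_eq_of_pos hn).symm⟩
    refine ⟨by rw [Function.iterate_succ_apply', iha, ha], ?_, ?_⟩
    · have e1 : (b₃ * ∑ i ∈ Finset.range (m+1), b₄ ^ i) + b₃ * b₄ ^ (m+1)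
          = b₃ * ∑ i ∈ Finset.range (m+1+1), b₄ ^ i := by
        rw [Finset.sum_range_succ (fun i => b₄ ^ i) (m+1)]; ring
      have e2 : b₄ * b₄ ^ (m+1) = b₄ ^ (m+1+1) := by
        rw [pow_succ]; ring
      rw [Function.iterate_succ_apply', ihb, hφab, e1, e2]
    · rw [Function.iterate_succ_apply', ihc, hφc]
      simp only [Nat.add_sub_cancel]
      have h1 : ∑ i ∈ Finset.range (m+1), ((↑(m+1+1):ℤ) - 1 - (i:ℤ)) * b₄ ^ i
          = (∑ i ∈ Finset.range m, ((↑(m+1):ℤ) - 1 - (i:ℤ)) * b₄ ^ i) +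
            ∑ i ∈ Finset.range (m+1), b₄ ^ i := by
        have h2 : ∑ i ∈ Finset.range m, ((↑(m+1):ℤ) - 1 - (i:ℤ)) * b₄ ^ i
            = ∑ i ∈ Finset.range (m+1), ((↑(m+1):ℤ) - 1 - (i:ℤ)) * b₄ ^ i := by
          rw [Finset.sum_range_succ]
          have : ((↑(m+1):ℤ) - 1 - (m:ℤ)) = 0 := by push_cast; ring
          rw [this, zero_mul, add_zero]
        rw [h2, ← Finset.sum_add_distrib]
        refine Finset.sum_congr rfl fun i _ => ?_
        push_cast; ring
      have eE : ((↑(m+1):ℤ) * c₁ + b₃ * c₂ * ∑ i ∈ Finset.range m, ((↑(m+1):ℤ) - 1 - (i:ℤ)) * b₄ ^ i)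
            + b₃ * (c₂ * ∑ i ∈ Finset.range (m+1), b₄ ^ i) + c₁
          = (↑(m+1+1):ℤ) * c₁ + b₃ * c₂ * ∑ i ∈ Finset.range (m+1), ((↑(m+1+1):ℤ) - 1 - (i:ℤ)) * b₄ ^ i := by
        rw [h1]; push_cast; ring
      have eF : b₄ * (c₂ * ∑ i ∈ Finset.range (m+1), b₄ ^ i) + c₂
          = c₂ * ∑ i ∈ Finset.range (m+1+1), b₄ ^ i := by
        conv_rhs => rw [geom_sum_succ]
        ring
      rw [eE, eF]
end

section
/- For all integers b₃, b₄, c₁, c₂ and every natural number n ≥ 1, with b₃', b₄', c₁', c₂' as defined, the identity c₁'·(b₄' − 1) − c₂'·b₃' = n·(c₁·(b₄ − 1) − c₂·b₃)·(∑_{i=0}^{n−1} b₄^i) holds. -/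
lemma aux_telescope (b : ℤ) : ∀ m : ℕ,
    (∑ i ∈ Finset.range m, ((m : ℤ) - (i : ℤ)) * b ^ i) * (b - 1) =
      (∑ i ∈ Finset.range (m + 1), b ^ i) - (m + 1)
  | 0 => by simp
  | m + 1 => by
    have ih := aux_telescope b m
    have hsplit : (∑ i ∈ Finset.range (m + 1), ((m + 1 : ℕ) - (i : ℤ) : ℤ) * b ^ i) =
        (∑ i ∈ Finset.range m, ((m : ℤ) - (i : ℤ)) * b ^ i) +
          ∑ i ∈ Finset.range (m + 1), b ^ i := by
      rw [Finset.sum_range_succ, Finset.sum_range_succ (fun i => b ^ i) m, ← add_assoc,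
        ← Finset.sum_add_distrib]
      congr 1
      · apply Finset.sum_congr rfl
        intro i _
        push_cast
        ring
      · push_cast
        ring
    push_cast at hsplit ⊢
    rw [hsplit, add_mul, ih, geom_sum_mul, Finset.sum_range_succ, Finset.sum_range_succ,
      Finset.sum_range_succ (fun i => b ^ i) m]
    ring

theorem iterate_coeff_identity (b₃ b₄ c₁ c₂ : ℤ) (n : ℕ) (hn : 1 ≤ n)
    (b₃' b₄' c₁' c₂' : ℤ)
    (hb₃' : b₃' = b₃ * ∑ i ∈ Finset.range n, b₄ ^ i)
    (hb₄' : b₄' = b₄ ^ n)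
    (hc₁' : c₁' = (n : ℤ) * c₁ + b₃ * c₂ * ∑ i ∈ Finset.range (n - 1), ((n : ℤ) - 1 - (i : ℤ)) * b₄ ^ i)
    (hc₂' : c₂' = c₂ * ∑ i ∈ Finset.range n, b₄ ^ i) :
    c₁' * (b₄' - 1) - c₂' * b₃' =
      (n : ℤ) * (c₁ * (b₄ - 1) - c₂ * b₃) * ∑ i ∈ Finset.range n, b₄ ^ i := by
  obtain ⟨m, rfl⟩ := Nat.exists_eq_add_of_le hn
  subst hb₃' hb₄' hc₁' hc₂'
  simp only [Nat.add_sub_cancel_left] at *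
  have h2 := aux_telescope b₄ m
  have hT : (∑ i ∈ Finset.range m, ((1 + m : ℕ) - 1 - (i : ℤ) : ℤ) * b₄ ^ i) =
      ∑ i ∈ Finset.range m, ((m : ℤ) - (i : ℤ)) * b₄ ^ i := by
    apply Finset.sum_congr rfl; intro i _; push_cast; ring
  have hn' : (1 + m : ℕ) = m + 1 := by omega
  rw [hT, hn']
  have h1 : (∑ i ∈ Finset.range (m + 1), b₄ ^ i) * (b₄ - 1) = b₄ ^ (m + 1) - 1 :=
    geom_sum_mul b₄ (m + 1)
  set S := ∑ i ∈ Finset.range (m + 1), b₄ ^ i with hS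
  set T := ∑ i ∈ Finset.range m, ((m : ℤ) - (i : ℤ)) * b₄ ^ i with hTT
  push_cast
  linear_combination (-((m : ℤ) + 1) * c₁ - b₃ * c₂ * T) * h1 + b₃ * c₂ * S * h2
end

section
/- Let b₃, b₄, c₁, c₂ be integers and let n ≥ 1 be an odd natural number. With b₃', b₄', c₁', c₂' as defined, one has c₁'·(b₄' − 1) − c₂'·b₃' = 0 if and only if c₁·(b₄ − 1) − c₂·b₃ = 0. -/
lemma key_aux (b : ℤ) : ∀ m : ℕ,
    (b - 1) * ∑ i ∈ Finset.range m, ((m : ℤ) - (i : ℤ)) * b ^ i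
      = (∑ i ∈ Finset.range (m + 1), b ^ i) - (m + 1) := by
  intro m
  induction m with
  | zero => simp
  | succ m ih =>
    have h1 : ∑ i ∈ Finset.range (m + 1), (((m : ℤ) + 1) - (i : ℤ)) * b ^ i
        = (∑ i ∈ Finset.range (m + 1), ((m : ℤ) - (i : ℤ)) * b ^ i)
          + ∑ i ∈ Finset.range (m + 1), b ^ i := by
      rw [← Finset.sum_add_distrib]
      exact Finset.sum_congr rfl fun i _ => by ring
    have h2 : ∑ i ∈ Finset.range (m + 1), ((m : ℤ) - (i : ℤ)) * b ^ i
        = ∑ i ∈ Finset.range m, ((m : ℤ) - (i : ℤ)) * b ^ i := by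
      rw [Finset.sum_range_succ]; simp
    push_cast
    rw [h1, h2, mul_add, ih, Finset.sum_range_succ (f := fun i => b ^ i) (n := m + 1)]
    linear_combination geom_sum_mul b (m + 1)

theorem iterate_coeff_vanish_iff_odd (b₃ b₄ c₁ c₂ : ℤ) (n : ℕ) (hn : 1 ≤ n) (hodd : Odd n)
    (b₃' b₄' c₁' c₂' : ℤ)
    (hb₃' : b₃' = b₃ * ∑ i ∈ Finset.range n, b₄ ^ i)
    (hb₄' : b₄' = b₄ ^ n)
    (hc₁' : c₁' = (n : ℤ) * c₁ + b₃ * c₂ * ∑ i ∈ Finset.range (n - 1), ((n : ℤ) - 1 - (i : ℤ)) * b₄ ^ i)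
    (hc₂' : c₂' = c₂ * ∑ i ∈ Finset.range n, b₄ ^ i) :
    c₁' * (b₄' - 1) - c₂' * b₃' = 0 ↔ c₁ * (b₄ - 1) - c₂ * b₃ = 0 := by
  set S : ℤ := ∑ i ∈ Finset.range n, b₄ ^ i with hS
  set T : ℤ := ∑ i ∈ Finset.range (n - 1), ((n : ℤ) - 1 - (i : ℤ)) * b₄ ^ i with hT
  obtain ⟨m, rfl⟩ : ∃ m, n = m + 1 := ⟨n - 1, (Nat.succ_pred_eq_of_pos hn).symm⟩
  have hTm : T = ∑ i ∈ Finset.range m, ((m : ℤ) - (i : ℤ)) * b₄ ^ i := by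
    rw [hT]
    simp only [Nat.add_sub_cancel]
    exact Finset.sum_congr rfl fun i _ => by push_cast; ring
  have hkey : (b₄ - 1) * T = S - ((m : ℤ) + 1) := by
    rw [hTm, key_aux b₄ m, hS]
  have hgeom : (b₄ - 1) * S = b₄ ^ (m + 1) - 1 := by
    rw [hS, mul_comm]
    exact geom_sum_mul b₄ (m + 1)
  have hfac : c₁' * (b₄' - 1) - c₂' * b₃'
      = S * (((m : ℤ) + 1) * (c₁ * (b₄ - 1) - c₂ * b₃)) := by
    rw [hc₁', hb₄', hc₂', hb₃']
    push_cast
    linear_combination (-(((m : ℤ) + 1) * c₁ + b₃ * c₂ * T)) * hgeom + c₂ * b₃ * S * hkey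
  have hSne : S ≠ 0 := by
    have := Odd.geom_sum_pos (x := b₄) hodd
    rw [hS]; positivity
  rw [hfac, mul_eq_zero, mul_eq_zero]
  constructor
  · rintro (h | h | h)
    · exact absurd h hSne
    · exfalso
      have : (0:ℤ) < (m : ℤ) + 1 := by positivity
      omega
    · exact h
  · intro h; right; right; exact h
end

section
/- Let b₃, b₄, c₁, c₂ be integers and let n ≥ 2 be an even natural number. With b₃', b₄', c₁', c₂' as defined, one has c₁'·(b₄' − 1) − c₂'·b₃' = 0 if and only if either c₁·(b₄ − 1) − c₂·b₃ = 0 or b₄ = −1. -/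
/-!
Writing `S = ∑_{i<n} b₄ⁱ` and `T = ∑_{i<n-1} (n-1-i) b₄ⁱ`, the geometric-sum identities
`S (b₄ - 1) = b₄ⁿ - 1` and `T (b₄ - 1) = S - n` give
`c₁' (b₄' - 1) - c₂' b₃' = n S (c₁ (b₄ - 1) - c₂ b₃)`.
For `n ≠ 0` the factor `S` is an integer geometric sum, which vanishes exactly when `b₄ = -1`
and `n` is even.
-/

open Finset

section WeightedGeomSum

variable {R : Type*} [CommRing R]

theorem sum_range_succ_sub_mul_pow (x : R) (m : ℕ) :
    ∑ i ∈ range (m + 1), ((m + 1 : ℕ) - (i : R)) * x ^ i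
      = ∑ i ∈ range m, ((m : R) - i) * x ^ i + ∑ i ∈ range (m + 1), x ^ i := by
  have hsplit (i : ℕ) : ((m + 1 : ℕ) - (i : R)) * x ^ i = ((m : R) - i) * x ^ i + x ^ i := by
    push_cast; ring
  simp only [hsplit, sum_add_distrib, sum_range_succ (fun i => ((m : R) - i) * x ^ i), sub_self,
    zero_mul, add_zero]

theorem sum_range_sub_mul_pow_mul_sub_one (x : R) (m : ℕ) :
    (∑ i ∈ range m, ((m : R) - i) * x ^ i) * (x - 1)
      = ∑ i ∈ range (m + 1), x ^ i - (m + 1) := by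
  induction m with
  | zero => simp
  | succ m ih =>
    rw [sum_range_succ_sub_mul_pow, add_mul, ih, geom_sum_mul, sum_range_succ _ (m + 1)]
    push_cast
    ring

theorem sum_range_pred_sub_mul_pow_mul_sub_one (x : R) (n : ℕ) :
    (∑ i ∈ range (n - 1), ((n : R) - 1 - i) * x ^ i) * (x - 1)
      = ∑ i ∈ range n, x ^ i - n := by
  cases n with
  | zero => simp
  | succ m =>
    simpa only [Nat.add_sub_cancel, Nat.cast_succ, add_sub_cancel_right]
      using sum_range_sub_mul_pow_mul_sub_one x m

end WeightedGeomSum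

theorem iterate_coeff_det_eq {R : Type*} [CommRing R] (b₃ b₄ c₁ c₂ : R) (n : ℕ) :
    ((n : R) * c₁ + b₃ * c₂ * ∑ i ∈ range (n - 1), ((n : R) - 1 - i) * b₄ ^ i) * (b₄ ^ n - 1)
        - (c₂ * ∑ i ∈ range n, b₄ ^ i) * (b₃ * ∑ i ∈ range n, b₄ ^ i)
      = n * (∑ i ∈ range n, b₄ ^ i) * (c₁ * (b₄ - 1) - c₂ * b₃) := by
  rw [← geom_sum_mul]
  linear_combination b₃ * c₂ * (∑ i ∈ range n, b₄ ^ i) *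
    sum_range_pred_sub_mul_pow_mul_sub_one b₄ n

theorem iterate_coeff_vanish_iff_even (b₃ b₄ c₁ c₂ : ℤ) (n : ℕ) (hn : 2 ≤ n) (heven : Even n)
    (b₃' b₄' c₁' c₂' : ℤ)
    (hb₃' : b₃' = b₃ * ∑ i ∈ Finset.range n, b₄ ^ i)
    (hb₄' : b₄' = b₄ ^ n)
    (hc₁' : c₁' = (n : ℤ) * c₁ + b₃ * c₂ * ∑ i ∈ Finset.range (n - 1), ((n : ℤ) - 1 - (i : ℤ)) * b₄ ^ i)
    (hc₂' : c₂' = c₂ * ∑ i ∈ Finset.range n, b₄ ^ i) :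
    c₁' * (b₄' - 1) - c₂' * b₃' = 0 ↔ (c₁ * (b₄ - 1) - c₂ * b₃ = 0 ∨ b₄ = -1) := by
  have hn₀ : n ≠ 0 := by omega
  rw [hb₃', hb₄', hc₁', hc₂', iterate_coeff_det_eq, mul_eq_zero, mul_eq_zero,
    geom_sum_eq_zero_iff_neg_one hn₀, Nat.cast_eq_zero]
  simp only [hn₀, heven, and_true, false_or]
  exact or_comm
end

section
/- For all integers b₃, b₄, c₁, c₂ and every natural number n ≥ 1, with b₃', b₄', c₁', c₂' as defined, the congruence b₄'·(b₃' + 1) − 1 − c₁'·(b₄' − 1) + c₂'·b₃' ≡ n·(b₄·(b₃ + 1) − 1 − c₁·(b₄ − 1) + b₃·c₂) − (n − 1)·(b₄ − 1) (mod 2) holds. -/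
theorem iterate_coeff_congruence (b₃ b₄ c₁ c₂ : ℤ) (n : ℕ) (hn : 1 ≤ n)
    (b₃' b₄' c₁' c₂' : ℤ)
    (hb₃' : b₃' = b₃ * ∑ i ∈ Finset.range n, b₄ ^ i)
    (hb₄' : b₄' = b₄ ^ n)
    (hc₁' : c₁' = (n : ℤ) * c₁ + b₃ * c₂ * ∑ i ∈ Finset.range (n - 1), ((n : ℤ) - 1 - (i : ℤ)) * b₄ ^ i)
    (hc₂' : c₂' = c₂ * ∑ i ∈ Finset.range n, b₄ ^ i) :
    b₄' * (b₃' + 1) - 1 - c₁' * (b₄' - 1) + c₂' * b₃' ≡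
      (n : ℤ) * (b₄ * (b₃ + 1) - 1 - c₁ * (b₄ - 1) + b₃ * c₂) - ((n : ℤ) - 1) * (b₄ - 1) [ZMOD 2] := by
  subst hb₃' hb₄' hc₁' hc₂'
  apply (ZMod.intCast_eq_intCast_iff _ _ 2).mp
  push_cast
  obtain ⟨m, rfl⟩ : ∃ m, n = m + 1 := ⟨n - 1, by omega⟩
  have hcase : ∀ x : ZMod 2, x = 0 ∨ x = 1 := by decide
  have hsq : ∀ x : ZMod 2, x * x = x := by decide
  rcases hcase ((b₄ : ℤ) : ZMod 2) with h | h <;> rw [h]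
  · have hT : ∑ x ∈ Finset.range (m + 1 - 1), (((m:ℕ):ZMod 2) + 1 - 1 - (x:ℕ)) * (0:ZMod 2) ^ x
        = (m : ZMod 2) := by
      simp only [Nat.add_sub_cancel]
      rcases Nat.eq_zero_or_pos m with rfl | hm
      · simp
      · rw [Finset.sum_eq_single_of_mem 0 (Finset.mem_range.2 hm)
          (fun i _ hi => by simp [zero_pow hi])]
        simp
    push_cast at hT ⊢
    rw [hT]
    rw [zero_geom_sum, if_neg (Nat.succ_ne_zero m), zero_pow (Nat.succ_ne_zero m)]
    ring
  · push_cast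
    simp only [one_pow, Finset.sum_const, Finset.card_range, nsmul_eq_mul, mul_one]
    push_cast
    linear_combination ((c₂:ZMod 2) * (b₃:ZMod 2)) * hsq ((m:ZMod 2)+1)
end

section
/- Let m, b₃, b₄, c₁, c₂ be integers with b₃ = m·(b₄ − 1), and let n ≥ 1 be a natural number. With c₁' and c₂' as defined, one has c₁' − m·c₂' = n·(c₁ − m·c₂). -/
lemma key_identity (b : ℤ) : ∀ n : ℕ, 1 ≤ n →
    (b - 1) * ∑ i ∈ Finset.range (n - 1), ((n : ℤ) - 1 - (i : ℤ)) * b ^ i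
      = (∑ i ∈ Finset.range n, b ^ i) - n := by
  intro n
  induction n with
  | zero => intro h; omega
  | succ k ih =>
    intro _
    rcases Nat.eq_zero_or_pos k with hk | hk
    · subst hk; simp
    · obtain ⟨j, rfl⟩ : ∃ j, k = j + 1 := ⟨k - 1, by omega⟩
      have ih' := ih hk
      simp only [Nat.add_sub_cancel] at ih' ⊢
      push_cast at ih' ⊢
      have e1 : ∑ i ∈ Finset.range (j + 1), ((j:ℤ) + 1 + 1 - 1 - (i : ℤ)) * b ^ i
          = (∑ i ∈ Finset.range (j + 1), ((j:ℤ) + 1 - 1 - (i : ℤ)) * b ^ i)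
            + ∑ i ∈ Finset.range (j + 1), b ^ i := by
        rw [← Finset.sum_add_distrib]
        exact Finset.sum_congr rfl fun i _ => by ring
      have e2 : ∑ i ∈ Finset.range (j + 1), ((j:ℤ) + 1 - 1 - (i : ℤ)) * b ^ i
          = ∑ i ∈ Finset.range j, ((j:ℤ) + 1 - 1 - (i : ℤ)) * b ^ i := by
        rw [Finset.sum_range_succ]
        simp
      rw [e1, e2, mul_add, ih', mul_comm (b - 1), geom_sum_mul,
          Finset.sum_range_succ (n := j + 1)]
      ring

theorem iterate_coeff_linear_combination (m b₃ b₄ c₁ c₂ : ℤ) (hb₃ : b₃ = m * (b₄ - 1))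
    (n : ℕ) (hn : 1 ≤ n) (c₁' c₂' : ℤ)
    (hc₁' : c₁' = (n : ℤ) * c₁ + b₃ * c₂ * ∑ i ∈ Finset.range (n - 1), ((n : ℤ) - 1 - (i : ℤ)) * b₄ ^ i)
    (hc₂' : c₂' = c₂ * ∑ i ∈ Finset.range n, b₄ ^ i) :
    c₁' - m * c₂' = (n : ℤ) * (c₁ - m * c₂) := by
  have key := key_identity b₄ n hn
  subst hc₁' hc₂' hb₃
  linear_combination m * c₂ * key
end

section
/- Let n ≥ 1 be a natural number and b₃, b₄, c₁, c₂ integers with c₁·(b₄ − 1) − c₂·b₃ ≠ 0. Then for all real numbers ε, δ there exist integers a, b, real numbers x, y, and a real number t with 0 ≤ t ≤ 1 such that x + a = x + b₃·y·(∑_{i=0}^{n−1} b₄^i) + (n·c₁ + b₃·c₂·∑_{i=0}^{n−1} i·b₄^{n−1−i})·t + b₃·δ·(∑_{i=0}^{n−1} i·b₄^{n−1−i}) + n·ε and y + b = b₄^n·y + c₂·t·(∑_{i=0}^{n−1} b₄^i) + δ·(∑_{i=0}^{n−1} b₄^i). -/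
/-!
Multiplying the first equation by `b₄ - 1` and substituting the second turns the system into
`(b₄ - 1) a + b₃ b' = n (c₁ (b₄ - 1) - c₂ b₃) t + const` in integers `a, b'`, while `y` can be
solved from the second equation as long as `b₄ ^ n ≠ 1`. As `t` runs over `[0, 1]` the right-hand
side sweeps an interval of length `n |c₁ (b₄ - 1) - c₂ b₃|`, a nonzero multiple of
`gcd (b₄ - 1, b₃)`, so it meets the lattice of values of the left-hand side. The cases `b₄ = 1`
and `b₄ = -1` with `n` even leave a single integer unknown and are handled the same way.
-/

open Finset Set

theorem sub_one_mul_sum_mul_pow_sub {R : Type*} [CommRing R] (x : R) (n : ℕ) :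
    (x - 1) * ∑ i ∈ range n, (i : R) * x ^ (n - 1 - i) = ∑ i ∈ range n, x ^ i - n := by
  induction n with
  | zero => simp
  | succ n ih =>
    have hshift : ∑ i ∈ range (n + 1), (i : R) * x ^ (n + 1 - 1 - i) =
        x * ∑ i ∈ range n, (i : R) * x ^ (n - 1 - i) + n := by
      rw [sum_range_succ, mul_sum, Nat.add_sub_cancel, Nat.sub_self, pow_zero, mul_one]
      congr 1
      refine sum_congr rfl fun i hi => ?_
      rw [show n - i = n - 1 - i + 1 by have := mem_range.mp hi; omega, pow_succ]
      ring
    rw [hshift, geom_sum_succ]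
    push_cast
    linear_combination x * ih

theorem exists_int_mul_eq_mul_add_of_le {g P : ℝ} (hg : 0 < g) (hgP : g ≤ P) (Q : ℝ) :
    ∃ k : ℤ, ∃ t ∈ Icc (0 : ℝ) 1, g * k = P * t + Q := by
  have hk₀ : Q ≤ g * ⌈Q / g⌉ := by
    rw [← div_le_iff₀' hg]; exact Int.le_ceil _
  have hk₁ : g * ⌈Q / g⌉ ≤ Q + g := by
    have := Int.ceil_lt_add_one (Q / g)
    rw [← le_div_iff₀' hg, add_div, div_self hg.ne']; linarith
  have hP : 0 < P := hg.trans_le hgP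
  refine ⟨⌈Q / g⌉, (g * ⌈Q / g⌉ - Q) / P, ⟨by bound, ?_⟩, by field_simp; ring⟩
  rw [div_le_one hP]; linarith

theorem exists_int_mul_eq_mul_add {g P : ℝ} (hg : 0 < g) (hgP : g ≤ |P|) (Q : ℝ) :
    ∃ k : ℤ, ∃ t ∈ Icc (0 : ℝ) 1, g * k = P * t + Q := by
  rcases le_or_gt 0 P with hP | hP
  · exact exists_int_mul_eq_mul_add_of_le hg (by rwa [abs_of_nonneg hP] at hgP) Q
  · obtain ⟨k, t, ht, hk⟩ :=
      exists_int_mul_eq_mul_add_of_le (P := -P) hg (by rwa [abs_of_neg hP] at hgP) (-Q)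
    exact ⟨-k, t, ht, by push_cast; linarith⟩

theorem Int.exists_mul_eq_mul_add_of_dvd {g m : ℤ} (hg : 0 < g) (hgm : g ∣ m) (hm : m ≠ 0)
    (Q : ℝ) : ∃ k : ℤ, ∃ t ∈ Icc (0 : ℝ) 1, (g : ℝ) * k = m * t + Q := by
  have hle : (g : ℝ) ≤ |(m : ℝ)| := by
    exact_mod_cast Int.le_of_dvd (abs_pos.mpr hm) ((dvd_abs _ _).mpr hgm)
  exact exists_int_mul_eq_mul_add (by exact_mod_cast hg) hle Q

theorem Int.exists_add_mul_eq_mul_add_of_gcd_dvd {p q m : ℤ} (hpq : (Int.gcd p q : ℤ) ∣ m)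
    (hm : m ≠ 0) (Q : ℝ) : ∃ a b : ℤ, ∃ t ∈ Icc (0 : ℝ) 1, (p : ℝ) * a + q * b = m * t + Q := by
  have hg : 0 < (Int.gcd p q : ℤ) := by
    refine lt_of_le_of_ne (by positivity) fun h => hm ?_
    rwa [← h, zero_dvd_iff] at hpq
  obtain ⟨k, t, ht, hk⟩ := Int.exists_mul_eq_mul_add_of_dvd hg hpq hm Q
  refine ⟨k * Int.gcdA p q, k * Int.gcdB p q, t, ht, ?_⟩
  rw [← hk, Int.gcd_eq_gcd_ab]
  push_cast
  ring

/-- The two coordinates of `fⁿ(x, y, t) ≡ (x, y, t)` modulo `ℤ × ℤ`, with `x` cancelled;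
`S` and `T` stand for `∑ i < n, b₄ ^ i` and `∑ i < n, i * b₄ ^ (n - 1 - i)`. -/
def HasPeriodicSolution (n : ℕ) (b₃ b₄ c₁ c₂ : ℤ) (ε δ S T : ℝ) : Prop :=
  ∃ (a b : ℤ) (y t : ℝ), t ∈ Icc (0 : ℝ) 1 ∧
    (a : ℝ) = b₃ * y * S + (n * c₁ + b₃ * c₂ * T) * t + b₃ * δ * T + n * ε ∧
    (b : ℝ) = b₄ ^ n * y + c₂ * t * S + δ * S - y

section

variable {n : ℕ} {b₃ b₄ c₁ c₂ : ℤ} {ε δ S T : ℝ}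

theorem hasPeriodicSolution_of_eq_one (hn : n ≠ 0) (h : c₁ * (1 - 1) - c₂ * b₃ ≠ 0)
    (hS : S = n) : HasPeriodicSolution n b₃ 1 c₁ c₂ ε δ S T := by
  have hc₂ : c₂ ≠ 0 := by rintro rfl; simp at h
  have hb₃n : (b₃ : ℝ) * n ≠ 0 := by
    have : b₃ ≠ 0 := by rintro rfl; simp at h
    positivity
  obtain ⟨b, t, ht, hb⟩ :=
    Int.exists_mul_eq_mul_add_of_dvd one_pos (one_dvd _)
      (mul_ne_zero (Nat.cast_ne_zero.mpr hn) hc₂) (n * δ)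
  set y := -((n * c₁ + b₃ * c₂ * T) * t + b₃ * δ * T + n * ε) / (b₃ * n)
  have hy : y * (b₃ * n) = -((n * c₁ + b₃ * c₂ * T) * t + b₃ * δ * T + n * ε) :=
    div_mul_cancel₀ _ hb₃n
  push_cast at hb
  refine ⟨0, b, y, t, ht, ?_, ?_⟩
  · rw [hS]; linear_combination -hy
  · rw [hS]; linear_combination hb

theorem first_eq_of_sub_one_mul_eq (hb₄ : (b₄ : ℝ) ≠ 1) (hS : S * (b₄ - 1) = b₄ ^ n - 1)
    (hT : (b₄ - 1) * T = S - n) {a b : ℤ} {y t : ℝ}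
    (hb : (b : ℝ) = b₄ ^ n * y + c₂ * t * S + δ * S - y)
    (hab : (b₄ - 1) * (a : ℝ) = b₃ * b + n * (c₁ * (b₄ - 1) - c₂ * b₃) * t +
      n * ((b₄ - 1) * ε - b₃ * δ)) :
    (a : ℝ) = b₃ * y * S + (n * c₁ + b₃ * c₂ * T) * t + b₃ * δ * T + n * ε := by
  refine mul_left_cancel₀ (sub_ne_zero.mpr hb₄) ?_
  linear_combination hab + b₃ * hb - b₃ * y * hS - (b₃ * c₂ * t + b₃ * δ) * hT

theorem hasPeriodicSolution_of_pow_ne_one (hn : n ≠ 0) (h : c₁ * (b₄ - 1) - c₂ * b₃ ≠ 0)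
    (hb₄ : b₄ ≠ 1) (hpow : b₄ ^ n ≠ 1) (hS : S * (b₄ - 1) = b₄ ^ n - 1)
    (hT : (b₄ - 1) * T = S - n) : HasPeriodicSolution n b₃ b₄ c₁ c₂ ε δ S T := by
  have hdvd : (Int.gcd (b₄ - 1) b₃ : ℤ) ∣ n * (c₁ * (b₄ - 1) - c₂ * b₃) :=
    ((Int.gcd_dvd_left _ _).mul_left c₁ |>.sub ((Int.gcd_dvd_right _ _).mul_left c₂)).mul_left _
  obtain ⟨a, b, t, ht, hab⟩ := Int.exists_add_mul_eq_mul_add_of_gcd_dvd hdvd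
    (mul_ne_zero (Nat.cast_ne_zero.mpr hn) h) (n * ((b₄ - 1) * ε - b₃ * δ))
  have hpow' : (b₄ : ℝ) ^ n - 1 ≠ 0 := sub_ne_zero.mpr (by exact_mod_cast hpow)
  set y := (-b - c₂ * t * S - δ * S) / ((b₄ : ℝ) ^ n - 1)
  have hy : y * ((b₄ : ℝ) ^ n - 1) = -b - c₂ * t * S - δ * S := div_mul_cancel₀ _ hpow'
  have hb : ((-b : ℤ) : ℝ) = b₄ ^ n * y + c₂ * t * S + δ * S - y := by
    push_cast; linear_combination -hy
  refine ⟨a, -b, y, t, ht, first_eq_of_sub_one_mul_eq (by exact_mod_cast hb₄) hS hT hb ?_, hb⟩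
  push_cast at hab ⊢
  linarith

theorem hasPeriodicSolution_of_pow_eq_one (hn : n ≠ 0) (h : c₁ * (b₄ - 1) - c₂ * b₃ ≠ 0)
    (hb₄ : b₄ ≠ 1) (hpow : b₄ ^ n = 1) (hS : S * (b₄ - 1) = b₄ ^ n - 1)
    (hT : (b₄ - 1) * T = S - n) : HasPeriodicSolution n b₃ b₄ c₁ c₂ ε δ S T := by
  obtain ⟨rfl, heven⟩ := ((pow_eq_one_iff_of_ne_zero hn).mp hpow).resolve_left hb₄
  have hpow' : ((-1 : ℤ) : ℝ) ^ n = 1 := by exact_mod_cast hpow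
  have hS₀ : S = 0 := by
    rw [hpow'] at hS; push_cast at hS; linarith
  obtain ⟨k, t, ht, hk⟩ := Int.exists_mul_eq_mul_add_of_dvd two_pos
    ((even_iff_two_dvd.mp (heven.natCast (α := ℤ))).mul_right _)
    (mul_ne_zero (Nat.cast_ne_zero.mpr hn) h) (n * (-2 * ε - b₃ * δ))
  have hb : ((0 : ℤ) : ℝ) = (-1 : ℤ) ^ n * 0 + c₂ * t * S + δ * S - 0 := by simp [hS₀]
  refine ⟨-k, 0, 0, t, ht, first_eq_of_sub_one_mul_eq (by norm_num) hS hT hb ?_, hb⟩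
  push_cast at hk ⊢
  linarith

end

theorem periodic_point_exists (n : ℕ) (hn : 1 ≤ n) (b₃ b₄ c₁ c₂ : ℤ)
    (h : c₁ * (b₄ - 1) - c₂ * b₃ ≠ 0) :
    ∀ ε δ : ℝ, ∃ (a b : ℤ) (x y t : ℝ), 0 ≤ t ∧ t ≤ 1 ∧
      x + (a : ℝ) =
        x + (b₃ : ℝ) * y * (∑ i ∈ Finset.range n, (b₄ : ℝ) ^ i) +
          ((n : ℝ) * (c₁ : ℝ) + (b₃ : ℝ) * (c₂ : ℝ) *
            ∑ i ∈ Finset.range n, (i : ℝ) * (b₄ : ℝ) ^ (n - 1 - i)) * t +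
          (b₃ : ℝ) * δ * (∑ i ∈ Finset.range n, (i : ℝ) * (b₄ : ℝ) ^ (n - 1 - i)) + (n : ℝ) * ε ∧
      y + (b : ℝ) =
        (b₄ : ℝ) ^ n * y + (c₂ : ℝ) * t * (∑ i ∈ Finset.range n, (b₄ : ℝ) ^ i) +
          δ * (∑ i ∈ Finset.range n, (b₄ : ℝ) ^ i) := by
  intro ε δ
  have hn₀ : n ≠ 0 := Nat.one_le_iff_ne_zero.mp hn
  obtain ⟨a, b, y, t, ⟨ht₀, ht₁⟩, ha, hb⟩ : HasPeriodicSolution n b₃ b₄ c₁ c₂ ε δ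
      (∑ i ∈ range n, (b₄ : ℝ) ^ i) (∑ i ∈ range n, (i : ℝ) * (b₄ : ℝ) ^ (n - 1 - i)) := by
    have hS := geom_sum_mul (b₄ : ℝ) n
    have hT := sub_one_mul_sum_mul_pow_sub (b₄ : ℝ) n
    rcases eq_or_ne b₄ 1 with rfl | hb₄
    · exact hasPeriodicSolution_of_eq_one hn₀ h (by simp)
    rcases eq_or_ne (b₄ ^ n) 1 with hpow | hpow
    · exact hasPeriodicSolution_of_pow_eq_one hn₀ h hb₄ hpow hS hT
    · exact hasPeriodicSolution_of_pow_ne_one hn₀ h hb₄ hpow hS hT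
  exact ⟨a, b, 0, y, t, ht₀, ht₁, by linarith, by linarith⟩
end

section
/- Let c₁, c₂ be integers with c₂ ≠ 0, let ε be an irrational real number, and define f : ℝ × ℝ × ℝ → ℝ × ℝ × ℝ by f(x, y, t) = (x + c₁·t + ε, y + c₂·t, t). Then for every natural number n ≥ 1 there do not exist real numbers x, y, t and integers k, l such that fⁿ(x, y, t) = (x + k, y + l, t). -/
theorem no_periodic_points_case_b₄_eq_one_b₃_eq_zero (c₁ c₂ : ℤ) (hc₂ : c₂ ≠ 0)
    (ε : ℝ) (hε : Irrational ε)
    (f : ℝ × ℝ × ℝ → ℝ × ℝ × ℝ)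
    (hf : ∀ x y t : ℝ, f (x, y, t) = (x + (c₁ : ℝ) * t + ε, y + (c₂ : ℝ) * t, t)) :
    ∀ n : ℕ, 1 ≤ n →
      ¬ ∃ (x y t : ℝ) (k l : ℤ), f^[n] (x, y, t) = (x + (k : ℝ), y + (l : ℝ), t) := by
  have key : ∀ (n : ℕ) (x y t : ℝ),
      f^[n] (x, y, t) = (x + n * ((c₁ : ℝ) * t + ε), y + n * ((c₂ : ℝ) * t), t) := by
    intro n
    induction n with
    | zero => intro x y t; simp
    | succ m ih =>
        intro x y t
        rw [Function.iterate_succ_apply, hf, ih]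
        push_cast
        refine Prod.ext ?_ (Prod.ext ?_ rfl) <;> simp <;> ring
  rintro n hn ⟨x, y, t, k, l, h⟩
  rw [key] at h
  simp only [Prod.mk.injEq] at h
  obtain ⟨h1, h2, -⟩ := h
  have hn0 : (n : ℝ) ≠ 0 := by positivity
  have ht : t = (l : ℝ) / (n * c₂) := by
    have : (n : ℝ) * ((c₂ : ℝ) * t) = l := by linarith
    field_simp
    have hc₂' : (c₂ : ℝ) ≠ 0 := Int.cast_ne_zero.mpr hc₂
    nlinarith [this]
  have : ε = (k : ℝ) / n - (c₁ : ℝ) * t := by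
    have : (n : ℝ) * ((c₁ : ℝ) * t + ε) = k := by linarith
    field_simp
    linarith [this]
  rw [ht] at this
  apply hε
  refine ⟨(k : ℚ) / n - (c₁ : ℚ) * ((l : ℚ) / (n * c₂)), ?_⟩
  rw [this]
  push_cast
  ring
end

section
/- Let b₃, b₄, c₁, c₂ be integers with b₄ ≠ 1 and c₁·(b₄ − 1) = c₂·b₃, let ε be an irrational real number, and define f : ℝ × ℝ × ℝ → ℝ × ℝ × ℝ by f(x, y, t) = (x + b₃·y + c₁·t + ε, b₄·y + c₂·t, t). Then for every natural number n ≥ 1 there do not exist real numbers x, y, t and integers k, l such that fⁿ(x, y, t) = (x + k, y + l, t). -/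
lemma iter_formula (b₃ b₄ c₁ c₂ : ℤ) (ε : ℝ)
    (f : ℝ × ℝ × ℝ → ℝ × ℝ × ℝ)
    (hf : ∀ x y t : ℝ, f (x, y, t) =
      (x + (b₃ : ℝ) * y + (c₁ : ℝ) * t + ε, (b₄ : ℝ) * y + (c₂ : ℝ) * t, t))
    (x y t : ℝ) : ∀ n : ℕ, f^[n] (x, y, t) =
      (x + (b₃ : ℝ) * (∑ m ∈ Finset.range n, ((b₄ : ℝ) ^ m * y +
          (c₂ : ℝ) * t * ∑ i ∈ Finset.range m, (b₄ : ℝ) ^ i)) + n * ((c₁ : ℝ) * t + ε),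
        (b₄ : ℝ) ^ n * y + (c₂ : ℝ) * t * ∑ m ∈ Finset.range n, (b₄ : ℝ) ^ m, t) := by
  intro n
  induction n with
  | zero => simp
  | succ n ih =>
    rw [Function.iterate_succ_apply', ih, hf]
    refine Prod.ext ?_ (Prod.ext ?_ rfl)
    · simp only [Finset.sum_range_succ]
      push_cast
      ring
    · simp only [geom_sum_succ]
      ring

lemma key_identity_s13 (b₃ b₄ c₁ c₂ : ℤ) (h : c₁ * (b₄ - 1) = c₂ * b₃) (y t : ℝ) :
    ∀ n : ℕ, ((b₄ : ℝ) - 1) * ((b₃ : ℝ) * (∑ m ∈ Finset.range n, ((b₄ : ℝ) ^ m * y +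
        (c₂ : ℝ) * t * ∑ i ∈ Finset.range m, (b₄ : ℝ) ^ i)) + n * ((c₁ : ℝ) * t)) =
      (b₃ : ℝ) * (((b₄ : ℝ) ^ n - 1) * y + (c₂ : ℝ) * t * ∑ m ∈ Finset.range n, (b₄ : ℝ) ^ m) := by
  have hR : (c₁ : ℝ) * ((b₄ : ℝ) - 1) = (c₂ : ℝ) * b₃ := by exact_mod_cast congrArg (Int.cast : ℤ → ℝ) h
  intro n
  induction n with
  | zero => simp
  | succ n ih =>
    have hg : (∑ i ∈ Finset.range n, (b₄ : ℝ) ^ i) * ((b₄ : ℝ) - 1) = (b₄ : ℝ) ^ n - 1 :=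
      geom_sum_mul _ n
    rw [Finset.sum_range_succ, Finset.sum_range_succ]
    push_cast
    linear_combination ih + (c₂ : ℝ) * (b₃ : ℝ) * t * hg + t * hR

theorem no_periodic_points_case_b₄_ne_one (b₃ b₄ c₁ c₂ : ℤ) (hb₄ : b₄ ≠ 1)
    (h : c₁ * (b₄ - 1) = c₂ * b₃) (ε : ℝ) (hε : Irrational ε)
    (f : ℝ × ℝ × ℝ → ℝ × ℝ × ℝ)
    (hf : ∀ x y t : ℝ, f (x, y, t) =
      (x + (b₃ : ℝ) * y + (c₁ : ℝ) * t + ε, (b₄ : ℝ) * y + (c₂ : ℝ) * t, t)) :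
    ∀ n : ℕ, 1 ≤ n →
      ¬ ∃ (x y t : ℝ) (k l : ℤ), f^[n] (x, y, t) = (x + (k : ℝ), y + (l : ℝ), t) := by
  intro n hn ⟨x, y, t, k, l, heq⟩
  rw [iter_formula b₃ b₄ c₁ c₂ ε f hf x y t n, Prod.mk.injEq, Prod.mk.injEq] at heq
  obtain ⟨hx, hy, -⟩ := heq
  set S : ℝ := ∑ m ∈ Finset.range n, (b₄ : ℝ) ^ m with hS
  set T : ℝ := ∑ m ∈ Finset.range n, ((b₄ : ℝ) ^ m * y +
      (c₂ : ℝ) * t * ∑ i ∈ Finset.range m, (b₄ : ℝ) ^ i) with hT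
  have key := key_identity_s13 b₃ b₄ c₁ c₂ h y t n
  rw [← hS, ← hT] at key
  have hy2 : ((b₄ : ℝ) ^ n - 1) * y + (c₂ : ℝ) * t * S = (l : ℝ) := by linarith [hy]
  have hx2 : (b₃ : ℝ) * T + (n : ℝ) * ((c₁ : ℝ) * t) + (n : ℝ) * ε = (k : ℝ) := by
    nlinarith [hx]
  have E : ((b₄ : ℝ) - 1) * n * ε = ((b₄ : ℝ) - 1) * k - (b₃ : ℝ) * l := by
    rw [hy2] at key
    linear_combination ((b₄ : ℝ) - 1) * hx2 - key
  have hd : ((b₄ : ℚ) - 1) * n ≠ 0 := by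
    have h1 : (b₄ : ℚ) - 1 ≠ 0 := by
      intro hc; apply hb₄; exact_mod_cast sub_eq_zero.mp hc
    have h2 : (n : ℚ) ≠ 0 := by positivity
    exact mul_ne_zero h1 h2
  apply hε
  refine ⟨(((b₄ : ℚ) - 1) * k - (b₃ : ℚ) * l) / (((b₄ : ℚ) - 1) * n), ?_⟩
  have hdR : ((b₄ : ℝ) - 1) * n ≠ 0 := by exact_mod_cast hd
  push_cast
  rw [div_eq_iff hdR]
  linarith [E]
end

section
/- Let a₃, b₃, b₄, c₁, c₂ be integers with a₃·(b₄ − 1) = 0, let ε, δ be real numbers, let n ≥ 1 be a natural number, and set S = ∑_{i=0}^{n−1} b₄^i and T = ∑_{i=0}^{n−1} i·b₄^{n−1−i}. Define X(x, y, t) = x + b₃·y·S + (n·c₁ + b₃·c₂·T)·t + b₃·δ·T + n·ε and Y(x, y, t) = b₄^n·y + c₂·t·S + δ·S. If a₃·δ·S is an integer, then for all real numbers x, y, both X(x + a₃·y, y, 1) − (X(x, y, 0) + a₃·Y(x, y, 0)) and Y(x + a₃·y, y, 1) − Y(x, y, 0) are integers. -/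
theorem iterate_respects_identification_case_II
    (a₃ b₃ b₄ c₁ c₂ : ℤ) (ha : a₃ * (b₄ - 1) = 0) (ε δ : ℝ) (n : ℕ) (hn : 1 ≤ n)
    (S T : ℝ)
    (hS : S = ∑ i ∈ Finset.range n, (b₄ : ℝ) ^ i)
    (hT : T = ∑ i ∈ Finset.range n, (i : ℝ) * (b₄ : ℝ) ^ (n - 1 - i))
    (X Y : ℝ → ℝ → ℝ → ℝ)
    (hX : ∀ x y t : ℝ, X x y t =
      x + (b₃ : ℝ) * y * S + ((n : ℝ) * (c₁ : ℝ) + (b₃ : ℝ) * (c₂ : ℝ) * T) * t +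
        (b₃ : ℝ) * δ * T + (n : ℝ) * ε)
    (hY : ∀ x y t : ℝ, Y x y t = (b₄ : ℝ) ^ n * y + (c₂ : ℝ) * t * S + δ * S)
    (hint : ∃ m : ℤ, (a₃ : ℝ) * δ * S = (m : ℝ)) :
    ∀ x y : ℝ,
      (∃ k : ℤ, X (x + (a₃ : ℝ) * y) y 1 - (X x y 0 + (a₃ : ℝ) * Y x y 0) = (k : ℝ)) ∧
      (∃ l : ℤ, Y (x + (a₃ : ℝ) * y) y 1 - Y x y 0 = (l : ℝ)) := by
  obtain ⟨m, hm⟩ := hint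
  have hSZ : S = ((∑ i ∈ Finset.range n, b₄ ^ i : ℤ) : ℝ) := by
    rw [hS]; push_cast; ring
  have hTZ : T = ((∑ i ∈ Finset.range n, (i : ℤ) * b₄ ^ (n - 1 - i) : ℤ) : ℝ) := by
    rw [hT]; push_cast; ring
  have hpow : (a₃ : ℝ) * (b₄ : ℝ) ^ n = (a₃ : ℝ) := by
    rcases mul_eq_zero.mp ha with h | h
    · simp [h]
    · have : b₄ = 1 := by omega
      simp [this]
  intro x y
  constructor
  · refine ⟨(n : ℤ) * c₁ + b₃ * c₂ * (∑ i ∈ Finset.range n, (i : ℤ) * b₄ ^ (n - 1 - i)) - m, ?_⟩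
    rw [hX, hX, hY]
    have : (a₃ : ℝ) * ((b₄ : ℝ) ^ n * y) = (a₃ : ℝ) * y := by
      rw [← mul_assoc, hpow]
    push_cast
    rw [hTZ] at *
    push_cast at *
    nlinarith [hm, this]
  · refine ⟨c₂ * (∑ i ∈ Finset.range n, b₄ ^ i), ?_⟩
    rw [hY, hY, hSZ]
    push_cast
    ring
end
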